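/- arXiv:cs/0308027 — 2 statements merged into one kernel-verified Lean document; each statement's English description precedes it below -/
import Mathlib

section
/- In any (t,w)-threshold secret sharing scheme with perfect secrecy (any t shares determine the key, any t-1 shares give no information), the size of each participant's share space is at least the size of the key space. -/
/-!
Fix a set `B` of `t` participants, one of them `i`, and a reference sharing `(k₀, r₀)`. By secrecy
on `B \ {i}`, every key `k` has randomness `r k` whose shares there agree with those of `(k₀, r₀)`.
Two of these sharings then agree on all of `B` as soon as they agree at `i`, so by recoverability
`k ↦ share k (r k) i` is injective.
-/

namespace ThresholdScheme

variable {K S R ι : Type*} [DecidableEq ι] (share : K → R → ι → S) {B : Finset ι} {i : ι}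

theorem injective_share_of_eqOn_erase (hi : i ∈ B)
    (hrec : ∀ k k' r r', (∀ j ∈ B, share k r j = share k' r' j) → k = k')
    (r : K → R) (hagree : ∀ k k', ∀ j ∈ B.erase i, share k (r k) j = share k' (r k') j) :
    Function.Injective fun k => share k (r k) i := by
  intro k k' hk
  refine hrec k k' (r k) (r k') fun j hj => ?_
  rcases eq_or_ne j i with rfl | hji
  · exact hk
  · exact hagree k k' j (Finset.mem_erase.mpr ⟨hji, hj⟩)

theorem card_key_le_card_share [Fintype K] [Fintype S] [Nonempty R] (hi : i ∈ B)
    (hrec : ∀ k k' r r', (∀ j ∈ B, share k r j = share k' r' j) → k = k')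
    (hsec : ∀ k k' r, ∃ r', ∀ j ∈ B.erase i, share k r j = share k' r' j) :
    Fintype.card K ≤ Fintype.card S := by
  rcases isEmpty_or_nonempty K with hK | ⟨⟨k₀⟩⟩
  · simp
  obtain ⟨r₀⟩ := ‹Nonempty R›
  choose r hr using (hsec k₀ · r₀)
  have hagree : ∀ k k', ∀ j ∈ B.erase i, share k (r k) j = share k' (r k') j :=
    fun k k' j hj => (hr k j hj).symm.trans (hr k' j hj)
  exact Fintype.card_le_of_injective _ (injective_share_of_eqOn_erase share hi hrec r hagree)

end ThresholdScheme

/-- In any `(t,w)`-threshold secret sharing scheme with perfect secrecy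
(any `t` shares determine the key, any `t-1` shares give no information),
the size of each participant's share space is at least the size of the key space. -/
theorem share_space_ge_key_space
    {K S R : Type*} [Fintype K] [Fintype S] [Nonempty R]
    {w t : ℕ} (ht : 0 < t) (htw : t ≤ w)
    (share : K → R → Fin w → S)
    (hrec : ∀ B : Finset (Fin w), B.card = t →
      ∀ k k' r r', (∀ i ∈ B, share k r i = share k' r' i) → k = k')
    (hsec : ∀ B : Finset (Fin w), B.card = t - 1 →
      ∀ k k' r, ∃ r', ∀ i ∈ B, share k r i = share k' r' i) :
    Fintype.card K ≤ Fintype.card S := by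
  obtain ⟨B, -, hB⟩ := Finset.exists_subset_card_eq (s := (Finset.univ : Finset (Fin w)))
    (by simpa using htw)
  obtain ⟨i, hi⟩ := Finset.card_pos.mp (hB ▸ ht)
  have hcard : (B.erase i).card = t - 1 := by rw [Finset.card_erase_of_mem hi, hB]
  exact ThresholdScheme.card_key_le_card_share share hi (hrec B hB) (hsec _ hcard)
end

section
/- Lagrange-style integer interpolation used in Shoup's scheme: let S be a set of t distinct points in {0,…,w} and Δ = w!. For i ∈ {0,…,w}\S and j ∈ S, the scaled Lagrange coefficient λ^S_{i,j} = Δ · ∏_{j'∈S, j'≠j} (i − j′)/(j − j′) is an integer. -/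
/-! The denominator `∏_{j' ∈ S, j' ≠ j} (j - j')` divides the same product taken over all of
`{0,…,w} \ {j}`, which is `± j! (w - j)!` and hence divides `w!`; the numerator is an integer. -/

open Finset Nat

theorem prod_range_natCast_sub_eq_factorial (n : ℕ) :
    ∏ k ∈ range n, ((n : ℤ) - k) = n ! := by
  rw [← Nat.descFactorial_self, Nat.descFactorial_eq_prod_range, Nat.cast_prod]
  refine prod_congr rfl fun k hk => ?_
  rw [Nat.cast_sub (mem_range.mp hk).le]

theorem prod_range_erase_natCast_sub (n m : ℕ) :
    ∏ k ∈ (range (n + m + 1)).erase n, ((n : ℤ) - k) = (-1) ^ m * (n ! * m !) := by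
  induction m with
  | zero => simp [range_add_one, prod_range_natCast_sub_eq_factorial]
  | succ m ih =>
    have hinsert : (range (n + (m + 1) + 1)).erase n =
        insert (n + m + 1) ((range (n + m + 1)).erase n) := by
      rw [range_add_one (n := n + (m + 1)), erase_insert_of_ne (by omega), ← add_assoc]
    rw [hinsert, prod_insert (by simp), ih, Nat.factorial_succ]
    push_cast
    ring

theorem prod_erase_natCast_sub_dvd_factorial {w j : ℕ} {T : Finset ℕ}
    (hT : T ⊆ range (w + 1)) (hj : j ≤ w) :
    ∏ k ∈ T.erase j, ((j : ℤ) - k) ∣ (w ! : ℤ) := by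
  refine (prod_dvd_prod_of_subset _ _ _ (erase_subset_erase j hT)).trans ?_
  obtain ⟨m, rfl⟩ := Nat.exists_eq_add_of_le hj
  rw [prod_range_erase_natCast_sub, ((isUnit_neg_one (α := ℤ)).pow m).mul_left_dvd]
  exact_mod_cast Nat.factorial_mul_factorial_dvd_factorial_add j m

theorem shoup_lagrange_coefficient_integer_general
    (w : ℕ)
    (S : Finset ℕ) (hS : S ⊆ Finset.range (w + 1))
    (i j : ℕ) (hj : j ∈ S) :
    ∃ z : ℤ, (z : ℚ) =
      (Nat.factorial w : ℚ) *
        ∏ j' ∈ S.erase j, (((i : ℚ) - (j' : ℚ)) / ((j : ℚ) - (j' : ℚ))) := by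
  have hjw : j ≤ w := Nat.lt_succ_iff.mp (mem_range.mp (hS hj))
  have hdvd := prod_erase_natCast_sub_dvd_factorial hS hjw
  refine ⟨(∏ j' ∈ S.erase j, ((i : ℤ) - j')) *
    ((w ! : ℤ) / ∏ j' ∈ S.erase j, ((j : ℤ) - j')), ?_⟩
  rw [Int.cast_mul, Int.cast_div_charZero hdvd, prod_div_distrib]
  push_cast
  ring

/-- Shoup's scaled Lagrange coefficients are integers: for `S ⊆ {0,…,w}` of size `t`,
`i ∉ S`, `j ∈ S`, and `Δ = w!`, the quantity
`Δ · ∏_{j'∈S, j'≠j} (i − j′)/(j − j′)` is an integer. -/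
theorem shoup_lagrange_coefficient_integer
    (w t : ℕ) (ht : 0 < t) (htw : t ≤ w)
    (S : Finset ℕ) (hS : S ⊆ Finset.range (w + 1)) (hcard : S.card = t)
    (i j : ℕ) (hi : i ∈ Finset.range (w + 1)) (hiS : i ∉ S) (hj : j ∈ S) :
    ∃ z : ℤ, (z : ℚ) =
      (Nat.factorial w : ℚ) *
        ∏ j' ∈ S.erase j, (((i : ℚ) - (j' : ℚ)) / ((j : ℚ) - (j' : ℚ))) :=
  shoup_lagrange_coefficient_integer_general w S hS i j hj
end
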